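/- Let S be a compact metric space and F : P(S) → C(S) a monotone population game. If for every globally neutrally stable state μ of F and every ν ∈ P(S) the score function h^F_{ν:μ} is right-continuous at 0, then NE(F) is a convex set: for all μ₁, μ₂ ∈ NE(F) and all t ∈ [0,1], the convex combination t·μ₁ + (1−t)·μ₂ belongs to NE(F). -/
import Mathlib


open MeasureTheory

lemma cm_integrable {S : Type*} [MetricSpace S] [CompactSpace S] [MeasurableSpace S]
    [BorelSpace S] (μ : Measure S) [IsFiniteMeasure μ] (f : C(S,ℝ)) : Integrable f μ :=
  (map_continuous f).integrable_of_hasCompactSupport (HasCompactSupport.of_compactSpace _)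

lemma fin_smul {S : Type*} [MeasurableSpace S] (μ : Measure S) [IsFiniteMeasure μ] (a : ℝ) :
    IsFiniteMeasure (ENNReal.ofReal a • μ) := by
  constructor
  simp only [Measure.smul_apply, smul_eq_mul]
  exact ENNReal.mul_lt_top ENNReal.ofReal_lt_top (measure_lt_top μ _)

lemma prob_comb {S : Type*} [MeasurableSpace S] (μ ν : Measure S)
    [IsProbabilityMeasure μ] [IsProbabilityMeasure ν] {a b : ℝ}
    (ha : 0 ≤ a) (hb : 0 ≤ b) (hab : a + b = 1) :
    IsProbabilityMeasure (ENNReal.ofReal a • μ + ENNReal.ofReal b • ν) := by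
  constructor
  simp only [Measure.add_apply, Measure.smul_apply, smul_eq_mul, measure_univ, mul_one]
  rw [← ENNReal.ofReal_add ha hb, hab, ENNReal.ofReal_one]

lemma integral_comb {S : Type*} [MetricSpace S] [CompactSpace S] [MeasurableSpace S]
    [BorelSpace S] (μ ν : Measure S) [IsProbabilityMeasure μ] [IsProbabilityMeasure ν]
    {a b : ℝ} (ha : 0 ≤ a) (hb : 0 ≤ b) (f : C(S,ℝ)) :
    ∫ s, f s ∂(ENNReal.ofReal a • μ + ENNReal.ofReal b • ν)
      = a * ∫ s, f s ∂μ + b * ∫ s, f s ∂ν := by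
  have h1 := fin_smul μ a
  have h2 := fin_smul ν b
  rw [integral_add_measure (cm_integrable _ f) (cm_integrable _ f),
    integral_smul_measure, integral_smul_measure,
    ENNReal.toReal_ofReal ha, ENNReal.toReal_ofReal hb, smul_eq_mul, smul_eq_mul]


/-- The convex combination `(1-η)•μ + η•ν` of two Borel measures. -/
noncomputable def mix {S : Type*} [MeasurableSpace S] (μ ν : Measure S) (η : ℝ) : Measure S :=
  ENNReal.ofReal (1 - η) • μ + ENNReal.ofReal η • ν

/-- The score function `h^F_{ν:μ}(η) = E_F(ν,(1-η)μ+ην) - E_F(μ,(1-η)μ+ην)`. -/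
noncomputable def score {S : Type*} [MetricSpace S] [MeasurableSpace S]
    (F : Measure S → C(S, ℝ)) (μ ν : Measure S) (η : ℝ) : ℝ :=
  (∫ s, F (mix μ ν η) s ∂ν) - ∫ s, F (mix μ ν η) s ∂μ

/-- For a monotone game whose score functions at each globally neutrally stable
state are right-continuous at `0`, the set of Nash equilibria is convex. -/
theorem monotone_convex_ne {S : Type*} [MetricSpace S] [CompactSpace S]
    [MeasurableSpace S] [BorelSpace S]
    (F : Measure S → C(S, ℝ))
    (hmono : ∀ π ν : Measure S, IsProbabilityMeasure π → IsProbabilityMeasure ν →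
      (∫ s, (F π s - F ν s) ∂π) - ∫ s, (F π s - F ν s) ∂ν ≤ 0)
    (hrc : ∀ μ : Measure S, IsProbabilityMeasure μ →
      (∀ ν : Measure S, IsProbabilityMeasure ν → ∫ s, F ν s ∂ν ≤ ∫ s, F ν s ∂μ) →
      ∀ ν : Measure S, IsProbabilityMeasure ν →
        Filter.Tendsto (score F μ ν) (nhdsWithin 0 (Set.Ioi 0)) (nhds (score F μ ν 0)))
    (μ₁ μ₂ : Measure S)
    (hμ₁ : μ₁ ∈ {μ : Measure S | IsProbabilityMeasure μ ∧
      ∀ ν : Measure S, IsProbabilityMeasure ν → ∫ s, F μ s ∂ν ≤ ∫ s, F μ s ∂μ})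
    (hμ₂ : μ₂ ∈ {μ : Measure S | IsProbabilityMeasure μ ∧
      ∀ ν : Measure S, IsProbabilityMeasure ν → ∫ s, F μ s ∂ν ≤ ∫ s, F μ s ∂μ})
    (t : ℝ) (ht0 : 0 ≤ t) (ht1 : t ≤ 1) :
    (ENNReal.ofReal t • μ₁ + ENNReal.ofReal (1 - t) • μ₂) ∈
      {μ : Measure S | IsProbabilityMeasure μ ∧
        ∀ ν : Measure S, IsProbabilityMeasure ν →
          ∫ s, F μ s ∂ν ≤ ∫ s, F μ s ∂μ} := by
  obtain ⟨p1, ne1⟩ := hμ₁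
  obtain ⟨p2, ne2⟩ := hμ₂
  set μt : Measure S := ENNReal.ofReal t • μ₁ + ENNReal.ofReal (1 - t) • μ₂ with hμt
  have pt : IsProbabilityMeasure μt :=
    prob_comb μ₁ μ₂ ht0 (by linarith) (by ring)
  -- NE implies GNSS, by monotonicity
  have gnss : ∀ μ : Measure S, IsProbabilityMeasure μ →
      (∀ ν : Measure S, IsProbabilityMeasure ν → ∫ s, F μ s ∂ν ≤ ∫ s, F μ s ∂μ) →
      ∀ ν : Measure S, IsProbabilityMeasure ν → ∫ s, F ν s ∂ν ≤ ∫ s, F ν s ∂μ := by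
    intro μ pμ hne ν pν
    have h := hmono μ ν pμ pν
    rw [integral_sub (cm_integrable μ _) (cm_integrable μ _),
      integral_sub (cm_integrable ν _) (cm_integrable ν _)] at h
    have h2 := hne ν pν
    linarith
  -- μt is a GNSS
  have gnss_t : ∀ ν : Measure S, IsProbabilityMeasure ν → ∫ s, F ν s ∂ν ≤ ∫ s, F ν s ∂μt := by
    intro ν pν
    have h1 := gnss μ₁ p1 ne1 ν pν
    have h2 := gnss μ₂ p2 ne2 ν pν
    rw [hμt, integral_comb μ₁ μ₂ ht0 (by linarith) (F ν)]
    nlinarith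
  refine ⟨pt, ?_⟩
  intro ν pν
  have htend := hrc μt pt gnss_t ν pν
  -- score is ≤ 0 on (0,1)
  have hev : ∀ᶠ η in nhdsWithin 0 (Set.Ioi 0), score F μt ν η ≤ 0 := by
    have h1 : ∀ᶠ η : ℝ in nhdsWithin 0 (Set.Ioi 0), η < 1 :=
      eventually_nhdsWithin_of_eventually_nhds
        (Filter.Tendsto.eventually_lt_const one_pos Filter.tendsto_id |>.mono (by intro x hx; exact hx))
    filter_upwards [h1, self_mem_nhdsWithin] with η hη1 hη0
    have hη0' : (0:ℝ) < η := hη0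
    have pπ : IsProbabilityMeasure (mix μt ν η) :=
      prob_comb μt ν (by linarith) (by linarith) (by ring)
    have hg := gnss_t (mix μt ν η) pπ
    have hint : ∫ s, F (mix μt ν η) s ∂(mix μt ν η)
        = (1 - η) * ∫ s, F (mix μt ν η) s ∂μt + η * ∫ s, F (mix μt ν η) s ∂ν :=
      integral_comb μt ν (by linarith) (by linarith) _
    rw [hint] at hg
    have key : η * (∫ s, F (mix μt ν η) s ∂ν - ∫ s, F (mix μt ν η) s ∂μt) ≤ 0 := by linarith
    rw [score]
    exact nonpos_of_mul_nonpos_right key hη0'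
  have hle : score F μt ν 0 ≤ 0 :=
    le_of_tendsto htend hev
  have hmix0 : mix μt ν 0 = μt := by
    simp [mix]
  rw [score, hmix0] at hle
  linarith
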